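/- Let n, m ≥ 1 and let φ₁, …, φ_{n+m} : [0,1] → ℂ be continuous. Then the product of iterated integrals is a sum over shuffles: I(φ₁, …, φₙ) · I(φ_{n+1}, …, φ_{n+m}) = Σ_σ I(φ_{σ⁻¹(1)}, …, φ_{σ⁻¹(n+m)}), where σ ranges over all permutations of {1, …, n+m} satisfying σ(1) < σ(2) < ⋯ < σ(n) and σ(n+1) < σ(n+2) < ⋯ < σ(n+m) (the (n,m)-shuffles). -/

import Mathlib

open MeasureTheory
open scoped Classical

/-- The iterated integral `I(φ₁,…,φₙ)` over the simplex
`{a ≤ t₁ ≤ ⋯ ≤ tₙ ≤ b} ⊂ ℝⁿ` of the product `φ₁(t₁)⋯φₙ(tₙ)`, with respect to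
Lebesgue measure.  For `n = 0` it equals `1` by convention. -/
noncomputable def simplexIntegral (n : ℕ) (φ : Fin n → ℝ → ℂ) (a b : ℝ) : ℂ :=
  ∫ t : Fin n → ℝ in
    {t | (∀ i, a ≤ t i ∧ t i ≤ b) ∧ ∀ i j : Fin n, i ≤ j → t i ≤ t j},
    ∏ i, φ i (t i)

/-!
Identifying `ℝⁿ × ℝᵐ` with `ℝⁿ⁺ᵐ`, the product of the two iterated integrals is one integral over
the points of `[0,1]ⁿ⁺ᵐ` whose first `n` and whose last `m` coordinates are nondecreasing. Off the
null set where two coordinates coincide, the coordinates of a point `t` are in a unique strict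
order, recorded by the permutation `σ` with `t ∘ σ⁻¹` strictly increasing, and the two block
conditions say exactly that `σ` is an `(n,m)`-shuffle. So the domain is, up to a null set, the
disjoint union over shuffles `σ` of these cells, and the substitution `t = s ∘ σ` maps the cell
of `σ` onto the simplex while turning the integrand into `∏ φ_{σ⁻¹(j)}(s_j)`.
-/

open Function Set Equiv

section Tuple

variable {α : Type*} [LinearOrder α] {N : ℕ} {t : Fin N → α}

theorem Tuple.eq_of_strictMono_comp_perm {σ τ : Perm (Fin N)}
    (hσ : StrictMono (t ∘ σ)) (hτ : StrictMono (t ∘ τ)) : σ = τ := by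
  have ht : Injective t := by
    simpa [comp_assoc] using hσ.injective.comp σ.symm.injective
  ext i
  exact congrArg Fin.val (ht (congrFun (Tuple.unique_monotone hσ.monotone hτ.monotone) i))

theorem Tuple.strictMono_comp_sort (ht : Injective t) : StrictMono (t ∘ Tuple.sort t) :=
  (Tuple.monotone_sort t).strictMono_of_injective (ht.comp (Tuple.sort t).injective)

theorem strictMono_comp_iff_of_strictMono_comp_inv {σ : Perm (Fin N)}
    (hσ : StrictMono (t ∘ ⇑σ⁻¹)) {k : ℕ} (f : Fin k → Fin N) :
    StrictMono (t ∘ f) ↔ StrictMono (σ ∘ f) := by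
  have ht : t ∘ f = (t ∘ ⇑σ⁻¹) ∘ (σ ∘ f) := by ext; simp
  rw [ht]
  exact ⟨fun h _ _ hab => hσ.lt_iff_lt.1 (h hab), hσ.comp⟩

end Tuple

theorem ae_apply_ne {ι : Type*} [Fintype ι] (μ : Measure (ι → ℝ)) [μ.IsAddHaarMeasure]
    {i j : ι} (hij : i ≠ j) : ∀ᵐ t ∂μ, t i ≠ t j := by
  set L : (ι → ℝ) →ₗ[ℝ] ℝ := LinearMap.proj (R := ℝ) (φ := fun _ => ℝ) i - LinearMap.proj j
  have hL : LinearMap.ker L ≠ ⊤ := fun h => by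
    have : Pi.single i (1 : ℝ) ∈ LinearMap.ker L := h ▸ Submodule.mem_top
    simp [L, Pi.single_eq_of_ne hij.symm] at this
  rw [ae_iff]
  convert Measure.addHaar_submodule μ _ hL using 2
  ext t
  simp [L, sub_eq_zero]

theorem ae_injective {ι : Type*} [Fintype ι] (μ : Measure (ι → ℝ)) [μ.IsAddHaarMeasure] :
    ∀ᵐ t ∂μ, Injective t := by
  filter_upwards [ae_all_iff.2 fun p : {p : ι × ι // p.1 ≠ p.2} => ae_apply_ne μ p.2]
    with t ht i j hij
  by_contra hne
  exact ht ⟨(i, j), hne⟩ hij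

section ChangeOfVariables

variable {α : Type*} [MeasureSpace α] [SigmaFinite (volume : Measure α)]

theorem setIntegral_mul_setIntegral_eq_setIntegral_fin_append {𝕜 : Type*} [RCLike 𝕜] {n m : ℕ}
    (f : (Fin n → α) → 𝕜) (g : (Fin m → α) → 𝕜) (s : Set (Fin n → α)) (t : Set (Fin m → α)) :
    (∫ x in s, f x) * (∫ y in t, g y) =
      ∫ z in {z : Fin (n + m) → α | z ∘ Fin.castAdd m ∈ s ∧ z ∘ Fin.natAdd n ∈ t},
        f (z ∘ Fin.castAdd m) * g (z ∘ Fin.natAdd n) := by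
  let e : (Fin (n + m) → α) ≃ᵐ (Fin n → α) × (Fin m → α) :=
    (MeasurableEquiv.piCongrLeft (fun _ => α) finSumFinEquiv).symm.trans
      (MeasurableEquiv.sumPiEquivProdPi fun _ => α)
  have he : MeasurePreserving e volume volume :=
    (volume_measurePreserving_sumPiEquivProdPi _).comp
      (volume_measurePreserving_piCongrLeft _ finSumFinEquiv).symm
  have he_apply : ∀ z, e z = (z ∘ Fin.castAdd m, z ∘ Fin.natAdd n) := fun z =>
    Prod.ext (funext fun i => show z (finSumFinEquiv (.inl i)) = _ by simp)
      (funext fun j => show z (finSumFinEquiv (.inr j)) = _ by simp)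
  rw [← setIntegral_prod_mul (μ := volume) (ν := volume), ← Measure.volume_eq_prod,
    ← he.setIntegral_preimage_emb e.measurableEmbedding]
  simp only [he_apply]
  rfl

theorem setIntegral_comp_perm {E : Type*} [NormedAddCommGroup E] [NormedSpace ℝ E] {N : ℕ}
    (σ : Perm (Fin N)) (f : (Fin N → α) → E) (s : Set (Fin N → α)) :
    ∫ t in {t | t ∘ σ ∈ s}, f (t ∘ σ) = ∫ t in s, f t :=
  (volume_measurePreserving_piCongrLeft (fun _ => α) σ).symm.setIntegral_preimage_emb
    (MeasurableEquiv.piCongrLeft _ σ).symm.measurableEmbedding f s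

end ChangeOfVariables

def simplex (N : ℕ) (a b : ℝ) : Set (Fin N → ℝ) := {t | (∀ i, t i ∈ Icc a b) ∧ Monotone t}

theorem simplexIntegral_eq_setIntegral_simplex (N : ℕ) (φ : Fin N → ℝ → ℂ) (a b : ℝ) :
    simplexIntegral N φ a b = ∫ t in simplex N a b, ∏ i, φ i (t i) :=
  rfl

theorem setIntegral_strictMono_eq_simplexIntegral (N : ℕ) (φ : Fin N → ℝ → ℂ) (a b : ℝ) :
    ∫ t in {t : Fin N → ℝ | (∀ i, t i ∈ Icc a b) ∧ StrictMono t}, ∏ i, φ i (t i) =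
      simplexIntegral N φ a b := by
  refine setIntegral_congr_set (Filter.eventuallyEq_set.2 ?_)
  filter_upwards [ae_injective (volume : Measure (Fin _ → ℝ))] with t ht
  exact and_congr_right fun _ =>
    ⟨StrictMono.monotone, fun h => Monotone.strictMono_of_injective h ht⟩

-- `σ i` is the rank of the coordinate `t i` among all coordinates of `t`.
def orderedCell {N : ℕ} (a b : ℝ) (σ : Perm (Fin N)) : Set (Fin N → ℝ) :=
  {t | (∀ i, t i ∈ Icc a b) ∧ StrictMono (t ∘ ⇑σ⁻¹)}

section OrderedCell

variable {N : ℕ} (a b : ℝ)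

theorem measurableSet_orderedCell (σ : Perm (Fin N)) : MeasurableSet (orderedCell a b σ) := by
  simp only [orderedCell, StrictMono, mem_Icc, comp_apply, measurableSet_setOfPred]
  fun_prop

theorem pairwise_disjoint_orderedCell : Pairwise (Disjoint on orderedCell (N := N) a b) :=
  fun _ _ hστ => disjoint_left.2 fun _ hσ hτ =>
    hστ (inv_inj.1 (Tuple.eq_of_strictMono_comp_perm hσ.2 hτ.2))

theorem integrableOn_orderedCell {φ : Fin N → ℝ → ℂ} (hφ : ∀ i, ContinuousOn (φ i) (Icc a b))
    (σ : Perm (Fin N)) : IntegrableOn (fun t => ∏ i, φ i (t i)) (orderedCell a b σ) := by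
  refine IntegrableOn.mono_set ?_ fun t ht => mem_univ_pi.2 ht.1
  refine ContinuousOn.integrableOn_compact (isCompact_univ_pi fun _ => isCompact_Icc) ?_
  exact continuousOn_finsetProd _ fun i _ =>
    (hφ i).comp (continuous_apply i).continuousOn fun t ht => ht i (mem_univ i)

theorem setIntegral_orderedCell (φ : Fin N → ℝ → ℂ) (σ : Perm (Fin N)) :
    ∫ t in orderedCell a b σ, ∏ i, φ i (t i) = simplexIntegral N (fun i => φ (σ⁻¹ i)) a b := by
  rw [← setIntegral_comp_perm σ, ← setIntegral_strictMono_eq_simplexIntegral]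
  have hcell : {s : Fin N → ℝ | s ∘ σ ∈ orderedCell a b σ} =
      {s | (∀ i, s i ∈ Icc a b) ∧ StrictMono s} := by
    ext s
    exact and_congr (σ.forall_congr_right (q := fun i => s i ∈ Icc a b)) (by simp [comp_assoc])
  have hprod : ∀ s : Fin N → ℝ, ∏ i, φ i ((s ∘ σ) i) = ∏ j, φ (σ⁻¹ j) (s j) := fun s => by
    rw [← Equiv.prod_comp σ (fun j => φ (σ⁻¹ j) (s j))]
    simp
  simp only [hcell, hprod]

end OrderedCell

def shuffles (n m : ℕ) : Finset (Perm (Fin (n + m))) :=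
  Finset.univ.filter (fun σ : Equiv.Perm (Fin (n + m)) =>
    StrictMono (fun i : Fin n => σ (Fin.castAdd m i)) ∧
    StrictMono (fun i : Fin m => σ (Fin.natAdd n i)))

theorem setOf_fin_append_mem_simplex_ae_eq_biUnion_orderedCell (n m : ℕ) (a b : ℝ) :
    {z : Fin (n + m) → ℝ | z ∘ Fin.castAdd m ∈ simplex n a b ∧ z ∘ Fin.natAdd n ∈ simplex m a b}
      =ᵐ[volume] ⋃ σ ∈ shuffles n m, orderedCell a b σ := by
  refine Filter.eventuallyEq_set.2 ?_
  filter_upwards [ae_injective (volume : Measure (Fin _ → ℝ))] with z hz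
  have hmono : ∀ {k} {f : Fin k → Fin (n + m)}, Injective f →
      (Monotone (z ∘ f) ↔ StrictMono (z ∘ f)) := fun hf =>
    ⟨fun h => h.strictMono_of_injective (hz.comp hf), StrictMono.monotone⟩
  have hshuffle : ∀ σ : Perm (Fin (n + m)), StrictMono (z ∘ ⇑σ⁻¹) →
      (σ ∈ shuffles n m ↔ StrictMono (z ∘ Fin.castAdd m) ∧ StrictMono (z ∘ Fin.natAdd n)) :=
    fun σ hσ => by
      rw [strictMono_comp_iff_of_strictMono_comp_inv hσ,
        strictMono_comp_iff_of_strictMono_comp_inv hσ]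
      simp [shuffles, comp_def]
  have hsort : StrictMono (z ∘ ⇑(Tuple.sort z)⁻¹⁻¹) := by
    rw [inv_inv]
    exact Tuple.strictMono_comp_sort hz
  simp only [simplex, orderedCell, mem_ofPred_eq, mem_iUnion, exists_prop,
    hmono (Fin.castAdd_injective n m), hmono (Fin.natAdd_injective m n)]
  have hbounds : (∀ i, z i ∈ Icc a b) ↔
      (∀ i, z (Fin.castAdd m i) ∈ Icc a b) ∧ ∀ j, z (Fin.natAdd n j) ∈ Icc a b :=
    Fin.forall_fin_add _
  constructor
  · rintro ⟨⟨hb₁, h₁⟩, hb₂, h₂⟩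
    exact ⟨_, (hshuffle _ hsort).2 ⟨h₁, h₂⟩, hbounds.2 ⟨hb₁, hb₂⟩, hsort⟩
  · rintro ⟨σ, hσ, hb, hzσ⟩
    obtain ⟨h₁, h₂⟩ := (hshuffle σ hzσ).1 hσ
    obtain ⟨hb₁, hb₂⟩ := hbounds.1 hb
    exact ⟨⟨hb₁, h₁⟩, hb₂, h₂⟩

theorem stmt9_general (n m : ℕ) (φ : Fin (n + m) → ℝ → ℂ)
    (hφ : ∀ i, ContinuousOn (φ i) (Set.Icc 0 1)) :
    simplexIntegral n (fun i => φ (Fin.castAdd m i)) 0 1 *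
        simplexIntegral m (fun i => φ (Fin.natAdd n i)) 0 1 =
      ∑ σ ∈ Finset.univ.filter (fun σ : Equiv.Perm (Fin (n + m)) =>
          StrictMono (fun i : Fin n => σ (Fin.castAdd m i)) ∧
          StrictMono (fun i : Fin m => σ (Fin.natAdd n i))),
        simplexIntegral (n + m) (fun i => φ (σ⁻¹ i)) 0 1 := by
  rw [simplexIntegral_eq_setIntegral_simplex, simplexIntegral_eq_setIntegral_simplex,
    setIntegral_mul_setIntegral_eq_setIntegral_fin_append,
    setIntegral_congr_set (setOf_fin_append_mem_simplex_ae_eq_biUnion_orderedCell n m 0 1)]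
  have hsplit : ∀ z : Fin (n + m) → ℝ, (∏ i, φ (Fin.castAdd m i) ((z ∘ Fin.castAdd m) i)) *
      ∏ j, φ (Fin.natAdd n j) ((z ∘ Fin.natAdd n) j) = ∏ i, φ i (z i) :=
    fun z => (Fin.prod_univ_add fun i => φ i (z i)).symm
  simp only [hsplit]
  rw [integral_biUnion_finset _ (fun σ _ => measurableSet_orderedCell 0 1 σ)
    ((pairwise_disjoint_orderedCell 0 1).set_pairwise _)
    (fun σ _ => integrableOn_orderedCell 0 1 hφ σ)]
  exact Finset.sum_congr rfl fun σ _ => setIntegral_orderedCell 0 1 φ σ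

/-- the shuffle formula.  The product of the iterated integrals of
`φ₁,…,φₙ` and of `φ_{n+1},…,φ_{n+m}` is the sum, over all `(n,m)`-shuffles `σ`
(permutations of `{1,…,n+m}` increasing on the first `n` and on the last `m`
indices), of the iterated integrals `I(φ_{σ⁻¹(1)},…,φ_{σ⁻¹(n+m)})`. -/
theorem stmt9 (n m : ℕ) (hn : 1 ≤ n) (hm : 1 ≤ m) (φ : Fin (n + m) → ℝ → ℂ)
    (hφ : ∀ i, ContinuousOn (φ i) (Set.Icc 0 1)) :
    simplexIntegral n (fun i => φ (Fin.castAdd m i)) 0 1 *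
        simplexIntegral m (fun i => φ (Fin.natAdd n i)) 0 1 =
      ∑ σ ∈ Finset.univ.filter (fun σ : Equiv.Perm (Fin (n + m)) =>
          StrictMono (fun i : Fin n => σ (Fin.castAdd m i)) ∧
          StrictMono (fun i : Fin m => σ (Fin.natAdd n i))),
        simplexIntegral (n + m) (fun i => φ (σ⁻¹ i)) 0 1 :=
  stmt9_general n m φ hφ
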